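/- arXiv:math/0609477 — 4 statements merged into one kernel-verified Lean document; each statement's English description precedes it below -/
import Mathlib

section
/- Let z be a positive irrational real number. If (m1,k1) and (m2,k2) are pairs of positive integers with m1*k1*z^2 - 2*(k1-m1)*z - 2 = m2*k2*z^2 - 2*(k2-m2)*z - 2, then m1 = m2 and k1 = k2. -/
/-!
Subtracting the two sides leaves `(m₁k₁ - m₂k₂) z² = 2((k₁ - m₁) - (k₂ - m₂)) z`, a rational linear
relation `a z = 2b` after dividing by `z ≠ 0`. Irrationality of `z` forces `a = b = 0`, i.e. the
pairs have the same product and the same difference, and a positive pair is determined by these two.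
-/

theorem Irrational.eq_zero_of_ratCast_mul_eq {z : ℝ} (hz : Irrational z) {a b : ℚ}
    (h : a * z = b) : a = 0 ∧ b = 0 := by
  have ha : a = 0 := by
    by_contra ha
    exact (hz.ratCast_mul ha).ne_rat b h
  subst ha
  simpa using h.symm

theorem eq_and_eq_of_mul_eq_of_sub_eq {R : Type*} [CommRing R] [NoZeroDivisors R]
    {m₁ k₁ m₂ k₂ : R} (hpos : m₁ + k₂ ≠ 0) (hmul : m₁ * k₁ = m₂ * k₂)
    (hsub : k₁ - m₁ = k₂ - m₂) : m₁ = m₂ ∧ k₁ = k₂ := by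
  have hk₁ : k₁ = k₂ - m₂ + m₁ := eq_add_of_sub_eq hsub
  have hfactor : (m₁ - m₂) * (m₁ + k₂) = 0 := by
    linear_combination hmul - m₁ * hk₁
  have hm : m₁ = m₂ := sub_eq_zero.mp ((mul_eq_zero.mp hfactor).resolve_right hpos)
  exact ⟨hm, by rw [hk₁, hm]; ring⟩

theorem stmt_0_general (z : ℝ) (hirr : Irrational z)
    (m1 k1 m2 k2 : ℤ) (hm1 : 0 < m1) (hk2 : 0 < k2)
    (h : (m1 : ℝ) * (k1 : ℝ) * z ^ 2 - 2 * ((k1 : ℝ) - (m1 : ℝ)) * z - 2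
       = (m2 : ℝ) * (k2 : ℝ) * z ^ 2 - 2 * ((k2 : ℝ) - (m2 : ℝ)) * z - 2) :
    m1 = m2 ∧ k1 = k2 := by
  set a : ℤ := m1 * k1 - m2 * k2
  set b : ℤ := (k1 - m1) - (k2 - m2)
  have hlin : ((a : ℚ) : ℝ) * z = ((2 * b : ℚ) : ℝ) := by
    refine mul_right_cancel₀ hirr.ne_zero ?_
    push_cast [a, b]
    linear_combination h
  obtain ⟨ha, hb⟩ := hirr.eq_zero_of_ratCast_mul_eq hlin
  have hmul : m1 * k1 = m2 * k2 := sub_eq_zero.mp (by exact_mod_cast ha)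
  have hsub : k1 - m1 = k2 - m2 := sub_eq_zero.mp (by simpa using hb)
  exact eq_and_eq_of_mul_eq_of_sub_eq (by omega) hmul hsub

theorem stmt_0 (z : ℝ) (hz : 0 < z) (hirr : Irrational z)
    (m1 k1 m2 k2 : ℤ) (hm1 : 0 < m1) (hk1 : 0 < k1) (hm2 : 0 < m2) (hk2 : 0 < k2)
    (h : (m1 : ℝ) * (k1 : ℝ) * z ^ 2 - 2 * ((k1 : ℝ) - (m1 : ℝ)) * z - 2
       = (m2 : ℝ) * (k2 : ℝ) * z ^ 2 - 2 * ((k2 : ℝ) - (m2 : ℝ)) * z - 2) :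
    m1 = m2 ∧ k1 = k2 :=
  stmt_0_general z hirr m1 k1 m2 k2 hm1 hk2 h
end

section
/- Let Γ be a subgroup of SL(2,ℝ) containing T = [[1,1],[0,1]], and let T_u = [[a₁,b₁],[c,d]] ∈ Γ with c ≠ 0. Then there exists an integer k such that the matrix T^k * T_u = [[a₁+kc, b₁+kd],[c,d]] satisfies (a₁+d)(a₁+kc+d) ≤ 0 and |a₁+kc+d| ≥ 2. -/
section IntegerMultiples

variable {K : Type*} [Field K] [LinearOrder K] [IsStrictOrderedRing K] [Archimedean K]

theorem exists_le_int_mul {c : K} (hc : c ≠ 0) (t : K) : ∃ k : ℤ, t ≤ k * c := by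
  rcases hc.lt_or_gt with hneg | hpos
  · obtain ⟨k, hk⟩ := exists_int_lt (t / c)
    exact ⟨k, (le_div_iff_of_neg hneg).mp hk.le⟩
  · obtain ⟨k, hk⟩ := exists_int_gt (t / c)
    exact ⟨k, (div_le_iff₀ hpos).mp hk.le⟩

theorem exists_int_mul_le {c : K} (hc : c ≠ 0) (t : K) : ∃ k : ℤ, k * c ≤ t := by
  obtain ⟨k, hk⟩ := exists_le_int_mul hc (-t)
  exact ⟨-k, by push_cast; linarith⟩

end IntegerMultiples

theorem stmt_12 (a₁ d c : ℝ) (hc : c ≠ 0) :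
    ∃ k : ℤ, (a₁ + d) * (a₁ + k * c + d) ≤ 0 ∧ |a₁ + k * c + d| ≥ 2 := by
  rcases le_or_gt 0 (a₁ + d) with htr | htr
  · obtain ⟨k, hk⟩ := exists_int_mul_le hc (-2 - (a₁ + d))
    refine ⟨k, mul_nonpos_of_nonneg_of_nonpos htr (by linarith), ?_⟩
    rw [ge_iff_le, le_abs]
    exact Or.inr (by linarith)
  · obtain ⟨k, hk⟩ := exists_le_int_mul hc (2 - (a₁ + d))
    refine ⟨k, mul_nonpos_of_nonpos_of_nonneg htr.le (by linarith), ?_⟩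
    rw [ge_iff_le, le_abs]
    exact Or.inl (by linarith)
end

section
/- Let z = a/b with a, b coprime naturals, b > 1, and let p be a prime with p^d exactly dividing b (d ≥ 1). Suppose m is a positive integer not divisible by p and k ∈ ℕ. Write m·(a/b)^(2^k) − 2 = s/t in lowest terms (s, t positive integers). Then the p-adic valuation of t equals d·2^k. Consequently, for positive integers m₁, m₂ not divisible by p and k₁ ≠ k₂, the rationals m₁(a/b)^(2^{k₁}) − 2 and m₂(a/b)^(2^{k₂}) − 2 are distinct. -/
theorem stmt_16 (a b p : ℕ) (hab : Nat.Coprime a b) (hb : 1 < b) (hp : p.Prime)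
    (d : ℕ) (hd : d = padicValNat p b) (hd1 : 1 ≤ d) :
    (∀ m k : ℕ, 0 < m → ¬ p ∣ m →
        padicValNat p (((m : ℚ) * ((a : ℚ) / (b : ℚ)) ^ (2 ^ k) - 2).den) = d * 2 ^ k) ∧
    (∀ m₁ m₂ k₁ k₂ : ℕ, 0 < m₁ → ¬ p ∣ m₁ → 0 < m₂ → ¬ p ∣ m₂ → k₁ ≠ k₂ →
        (m₁ : ℚ) * ((a : ℚ) / (b : ℚ)) ^ (2 ^ k₁) - 2 ≠
          (m₂ : ℚ) * ((a : ℚ) / (b : ℚ)) ^ (2 ^ k₂) - 2) := by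
  haveI : Fact p.Prime := ⟨hp⟩
  have hpb : p ∣ b := by
    by_contra h
    rw [hd, padicValNat.eq_zero_of_not_dvd h] at hd1; omega
  have ha0 : a ≠ 0 := by
    rintro rfl
    simp [Nat.Coprime, Nat.gcd_zero_left] at hab; omega
  have hpa : ¬ p ∣ a := fun h => hp.one_lt.ne' (Nat.eq_one_of_dvd_coprimes hab h hpb)
  have hb0 : (b : ℚ) ≠ 0 := by positivity
  have haQ : (a : ℚ) ≠ 0 := by exact_mod_cast ha0
  have key : ∀ m k : ℕ, 0 < m → ¬ p ∣ m →
      padicValNat p (((m : ℚ) * ((a : ℚ) / (b : ℚ)) ^ (2 ^ k) - 2).den) = d * 2 ^ k := by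
    intro m k hm hpm
    set N := 2 ^ k with hN
    have hN1 : 1 ≤ N := Nat.one_le_two_pow
    have hmQ : (m : ℚ) ≠ 0 := by exact_mod_cast hm.ne'
    have hx0 : (m : ℚ) * ((a : ℚ) / (b : ℚ)) ^ N ≠ 0 := by positivity
    have hvx : padicValRat p ((m : ℚ) * ((a : ℚ) / (b : ℚ)) ^ N) = -(d * N : ℕ) := by
      rw [padicValRat.mul hmQ (pow_ne_zero _ (div_ne_zero haQ hb0)),
        padicValRat.pow ((a : ℚ) / (b : ℚ)), padicValRat.div haQ hb0]
      simp only [padicValRat.of_nat, padicValNat.eq_zero_of_not_dvd hpm,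
        padicValNat.eq_zero_of_not_dvd hpa, ← hd]
      push_cast; ring
    have hv2 : (0:ℤ) ≤ padicValRat p (2 : ℚ) := by
      rw [show ((2:ℚ)) = ((2:ℕ):ℚ) by norm_num, padicValRat.of_nat]
      positivity
    have hlt : padicValRat p ((m : ℚ) * ((a : ℚ) / (b : ℚ)) ^ N) < padicValRat p (-2 : ℚ) := by
      rw [padicValRat.neg, hvx]
      have : (1:ℤ) ≤ (d * N : ℕ) := by exact_mod_cast Nat.one_le_iff_ne_zero.2 (by positivity)
      omega
    have hq0 : (m : ℚ) * ((a : ℚ) / (b : ℚ)) ^ N - 2 ≠ 0 := by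
      intro h
      have h2 : (m : ℚ) * ((a : ℚ) / (b : ℚ)) ^ N = 2 := by linarith
      rw [h2] at hvx
      rw [show ((2:ℚ)) = ((2:ℕ):ℚ) by norm_num, padicValRat.of_nat] at hvx
      have : (1:ℤ) ≤ (d * N : ℕ) := by exact_mod_cast Nat.one_le_iff_ne_zero.2 (by positivity)
      omega
    have hvq : padicValRat p ((m : ℚ) * ((a : ℚ) / (b : ℚ)) ^ N - 2) = -(d * N : ℕ) := by
      rw [sub_eq_add_neg]
      rw [padicValRat.add_eq_of_lt (p := p) (by rwa [← sub_eq_add_neg]) hx0 (by norm_num) hlt, hvx]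
    set q : ℚ := (m : ℚ) * ((a : ℚ) / (b : ℚ)) ^ N - 2 with hqdef
    have hdefn : padicValRat p q = padicValInt p q.num - padicValNat p q.den := rfl
    have hpden : p ∣ q.den := by
      by_contra h
      rw [hvq, padicValNat.eq_zero_of_not_dvd h] at hdefn
      have : (0:ℤ) ≤ padicValInt p q.num := by positivity
      have : (1:ℤ) ≤ (d * N : ℕ) := by exact_mod_cast Nat.one_le_iff_ne_zero.2 (by positivity)
      omega
    have hpnum : ¬ p ∣ q.num.natAbs := by
      intro h
      have hg : p ∣ Nat.gcd q.num.natAbs q.den := Nat.dvd_gcd h hpden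
      rw [q.reduced] at hg
      exact hp.one_lt.ne' (Nat.dvd_one.1 hg)
    have hnum0 : padicValInt p q.num = 0 := by
      unfold padicValInt
      exact padicValNat.eq_zero_of_not_dvd hpnum
    rw [hvq, hnum0] at hdefn
    omega
  refine ⟨key, ?_⟩
  intro m₁ m₂ k₁ k₂ h₁ hp₁ h₂ hp₂ hk heq
  have e1 := key m₁ k₁ h₁ hp₁
  have e2 := key m₂ k₂ h₂ hp₂
  rw [heq, e2] at e1
  have : (2:ℕ) ^ k₁ = 2 ^ k₂ := by
    have := Nat.eq_of_mul_eq_mul_left (by omega : 0 < d) e1.symm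
    omega
  exact hk (Nat.pow_right_injective (by norm_num) this)
end

section
/- Let a > b > 1 be coprime naturals and p a prime dividing b. Then for every n ≥ 1 there exist a function value assignment f(0) = 0 < f(1) < ... < f(n) and positive integers m₀, m₁, ..., mₙ, each coprime to p, such that the n+1 rational numbers z_i = m_i·(a/b)^(2^{f(i)}) − 2 are pairwise distinct and all lie in an interval of length 1. In particular the set { m·(a/b)^(2^k) − 2 : m ≥ 1, k ≥ 0 } does not satisfy the bounded clustering property. -/
lemma chain_aux (a b : ℕ) (hb : 0 < b) (hab : Nat.Coprime a b) :
    ∀ (ℓ : ℕ) (d : ℕ → ℕ) (N : ℕ), 0 < N → Nat.Coprime N a → ∀ r : ℕ,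
    ∃ m : ℕ → ℕ, (∀ i, i < ℓ → m i * b ^ d i = m (i + 1) * a ^ d i + 1) ∧
      m 0 % N = r % N := by
  intro ℓ
  induction ℓ with
  | zero => exact fun d N _ _ r => ⟨fun _ => r, fun i hi => absurd hi (Nat.not_lt_zero i), rfl⟩
  | succ ℓ ih =>
    intro d N hN hNa r
    set q := b ^ d 0 with hqdef
    have hq0 : 0 < q := Nat.pow_pos hb
    haveI : NeZero q := ⟨hq0.ne'⟩
    haveI : NeZero N := ⟨hN.ne'⟩
    have haq : Nat.Coprime a q := hab.pow_right _
    -- x : residue mod q with x * a^(d 0) + 1 ≡ 0 [MOD q]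
    have hu : IsUnit ((a : ZMod q) ^ d 0) := by
      exact ((ZMod.isUnit_iff_coprime a q).mpr haq).pow _
    set x : ZMod q := -(((a : ZMod q) ^ d 0)⁻¹) with hxdef
    have hxq : q ∣ x.val * a ^ d 0 + 1 := by
      rw [← ZMod.natCast_eq_zero_iff]
      push_cast
      rw [ZMod.natCast_rightInverse x]
      rw [hxdef, neg_mul, ZMod.inv_mul_of_unit _ hu]
      ring
    set y := (x.val * a ^ d 0 + 1) / q with hydef
    have hyq : y * q = x.val * a ^ d 0 + 1 := Nat.div_mul_cancel hxq
    -- j : residue mod N so that y + j * a^(d 0) ≡ r [MOD N]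
    have huN : IsUnit ((a : ZMod N) ^ d 0) := by
      exact ((ZMod.isUnit_iff_coprime a N).mpr hNa.symm).pow _
    set j : ZMod N := ((r : ZMod N) - (y : ZMod N)) * (((a : ZMod N) ^ d 0)⁻¹) with hjdef
    have hjN : (y + j.val * a ^ d 0) % N = r % N := by
      rw [← Nat.ModEq, ← ZMod.natCast_eq_natCast_iff]
      push_cast
      rw [ZMod.natCast_rightInverse j, hjdef, mul_assoc, ZMod.inv_mul_of_unit _ huN]
      ring
    set r₁ := x.val + j.val * q with hr₁def
    obtain ⟨m', hm'eq, hm'0⟩ := ih (fun i => d (i + 1)) (q * N)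
      (Nat.mul_pos hq0 hN) (Nat.Coprime.mul haq.symm hNa) r₁
    have hmod : m' 0 ≡ r₁ [MOD q * N] := hm'0
    -- divisibility
    have hr₁q : q ∣ r₁ * a ^ d 0 + 1 := by
      have : r₁ * a ^ d 0 + 1 = (x.val * a ^ d 0 + 1) + (j.val * a ^ d 0) * q := by ring
      rw [this]
      exact Nat.dvd_add hxq (dvd_mul_left q _)
    have hqdvd : q ∣ m' 0 * a ^ d 0 + 1 := by
      have h1 : m' 0 * a ^ d 0 + 1 ≡ r₁ * a ^ d 0 + 1 [MOD q] :=
        ((hmod.of_mul_right N).mul_right _).add_right 1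
      exact (Nat.modEq_zero_iff_dvd).mp ((h1.trans ((Nat.modEq_zero_iff_dvd).mpr hr₁q)))
    set m₀ := (m' 0 * a ^ d 0 + 1) / q with hm₀def
    have hm₀q : m₀ * q = m' 0 * a ^ d 0 + 1 := Nat.div_mul_cancel hqdvd
    -- m₀ ≡ y + j.val * a^(d 0) [MOD N]
    have hcancel : m₀ ≡ y + j.val * a ^ d 0 [MOD N] := by
      have hmod2 : m' 0 ≡ r₁ [MOD N * q] := by rwa [Nat.mul_comm]
      have h2 : m₀ * q ≡ (y + j.val * a ^ d 0) * q [MOD N * q] := by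
        have : (y + j.val * a ^ d 0) * q = r₁ * a ^ d 0 + 1 := by
          rw [add_mul, hyq]; ring
        rw [hm₀q, this]
        exact (hmod2.mul_right _).add_right 1
      exact h2.mul_right_cancel' hq0.ne'
    have hm₀N : m₀ % N = r % N := by
      calc m₀ % N = (y + j.val * a ^ d 0) % N := hcancel
        _ = r % N := hjN
    refine ⟨fun i => match i with | 0 => m₀ | (i + 1) => m' i, ?_, hm₀N⟩
    intro i hi
    match i with
    | 0 => simpa [mul_comm] using hm₀q
    | (i + 1) => exact hm'eq i (by omega)


lemma bound_lemma (a b n : ℕ) (hb : 2 ≤ b) (hba : b < a) (hn : 1 ≤ n) (i : ℕ) :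
    n * a ^ (2 ^ ((n * a) * i)) ≤ b ^ (2 ^ ((n * a) * (i + 1))) := by
  set K := n * a with hK
  set s := 2 ^ (K * i) with hs
  have hs1 : 1 ≤ s := Nat.one_le_two_pow
  have ha1 : 1 ≤ a := by omega
  have hK1 : 1 ≤ K := Nat.mul_le_mul hn ha1
  have h1 : n * a ^ s ≤ (n * a) ^ s := by
    rw [mul_pow]
    exact Nat.mul_le_mul (Nat.le_self_pow (by omega) n) le_rfl
  have h2 : (n * a) ^ s ≤ (2 ^ K) ^ s := Nat.pow_le_pow_left (Nat.lt_two_pow_self (n := K)).le s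
  have h3 : (2 ^ K) ^ s = 2 ^ (K * s) := by rw [← pow_mul]
  have h4 : 2 ^ (K * s) ≤ 2 ^ (2 ^ K * s) :=
    Nat.pow_le_pow_right (by norm_num) (Nat.mul_le_mul_right s (Nat.lt_two_pow_self (n := K)).le)
  have h5 : 2 ^ (2 ^ K * s) ≤ b ^ (2 ^ K * s) := Nat.pow_le_pow_left hb _
  have h6 : 2 ^ K * s = 2 ^ (K * (i + 1)) := by
    rw [hs, ← pow_add]
    congr 1
    ring
  calc n * a ^ s ≤ (n * a) ^ s := h1
    _ ≤ (2 ^ K) ^ s := h2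
    _ = 2 ^ (K * s) := h3
    _ ≤ 2 ^ (2 ^ K * s) := h4
    _ ≤ b ^ (2 ^ K * s) := h5
    _ = b ^ (2 ^ (K * (i + 1))) := by rw [h6]

section FieldFacts

variable {F : Type*} [Field F] [LinearOrder F] [IsStrictOrderedRing F]

lemma field_facts (a b n K : ℕ) (m : ℕ → ℕ) (hb : 1 < b) (hba : b < a) (hn : 1 ≤ n)
    (heq : ∀ i, i < n → m i * b ^ (2 ^ (K * (i + 1)) - 2 ^ (K * i))
      = m (i + 1) * a ^ (2 ^ (K * (i + 1)) - 2 ^ (K * i)) + 1)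
    (hbd : ∀ i, i < n → n * a ^ (2 ^ (K * i)) ≤ b ^ (2 ^ (K * (i + 1)))) :
    (∀ i j, i < j → j ≤ n →
      (m j : F) * ((a : F) / (b : F)) ^ (2 ^ (K * j)) <
        (m i : F) * ((a : F) / (b : F)) ^ (2 ^ (K * i))) ∧
    (∀ j, j ≤ n →
      (m 0 : F) * ((a : F) / (b : F)) ^ (2 ^ (K * 0)) ≤
        (m j : F) * ((a : F) / (b : F)) ^ (2 ^ (K * j)) + 1) := by
  have hb0 : (0 : F) < (b : F) := by exact_mod_cast Nat.lt_of_lt_of_le Nat.zero_lt_one hb.le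
  have ha0 : (0 : F) < (a : F) := by exact_mod_cast (by omega : (0 : ℕ) < a)
  have hn0 : (0 : F) < (n : F) := by exact_mod_cast hn
  set v : ℕ → F := fun i => (m i : F) * ((a : F) / (b : F)) ^ (2 ^ (K * i)) with hv
  have hstep : ∀ i, i < n →
      v i = v (i + 1) + (a : F) ^ (2 ^ (K * i)) / (b : F) ^ (2 ^ (K * (i + 1))) := by
    intro i hi
    have hBle : 2 ^ (K * i) ≤ 2 ^ (K * (i + 1)) :=
      Nat.pow_le_pow_right (by norm_num) (Nat.mul_le_mul_left K (Nat.le_succ i))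
    set B := 2 ^ (K * i) with hB
    set B' := 2 ^ (K * (i + 1)) with hB'
    set D := B' - B with hD
    have hDB : D + B = B' := Nat.sub_add_cancel hBle
    have hnat : m i * a ^ B * b ^ D = m (i + 1) * a ^ B' + a ^ B := by
      calc m i * a ^ B * b ^ D = (m i * b ^ D) * a ^ B := by ring
        _ = (m (i + 1) * a ^ D + 1) * a ^ B := by rw [heq i hi]
        _ = m (i + 1) * a ^ (D + B) + a ^ B := by rw [pow_add]; ring
        _ = m (i + 1) * a ^ B' + a ^ B := by rw [hDB]
    have hcast : (m i : F) * (a : F) ^ B * (b : F) ^ D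
        = (m (i + 1) : F) * (a : F) ^ B' + (a : F) ^ B := by exact_mod_cast hnat
    have hbsplit : (b : F) ^ B' = (b : F) ^ D * (b : F) ^ B := by rw [← pow_add, hDB]
    have hbB : (0 : F) < (b : F) ^ B := pow_pos hb0 _
    have hbB' : (0 : F) < (b : F) ^ B' := pow_pos hb0 _
    have hbD : (0 : F) < (b : F) ^ D := pow_pos hb0 _
    show (m i : F) * ((a : F) / (b : F)) ^ B
      = (m (i + 1) : F) * ((a : F) / (b : F)) ^ B' + (a : F) ^ B / (b : F) ^ B'
    rw [div_pow, div_pow]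
    field_simp
    rw [hbsplit]
    linear_combination (b : F) ^ B * hcast
  have hgap_pos : ∀ i, i < n →
      (0 : F) < (a : F) ^ (2 ^ (K * i)) / (b : F) ^ (2 ^ (K * (i + 1))) := by
    intro i hi
    exact div_pos (pow_pos ha0 _) (pow_pos hb0 _)
  have hgap_le : ∀ i, i < n →
      (a : F) ^ (2 ^ (K * i)) / (b : F) ^ (2 ^ (K * (i + 1))) ≤ 1 / (n : F) := by
    intro i hi
    have hc : (n : F) * (a : F) ^ (2 ^ (K * i)) ≤ (b : F) ^ (2 ^ (K * (i + 1))) := by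
      exact_mod_cast hbd i hi
    rw [div_le_div_iff₀ (pow_pos hb0 _) hn0]
    nlinarith [pow_pos ha0 (2 ^ (K * i))]
  have hlt : ∀ j i, i < j → j ≤ n → v j < v i := by
    intro j
    induction j with
    | zero => omega
    | succ k ih =>
      intro i hij hjn
      have hk : v (k + 1) < v k := by
        have := hstep k (by omega)
        have := hgap_pos k (by omega)
        linarith
      rcases Nat.lt_succ_iff_lt_or_eq.mp hij with h | h
      · exact hk.trans (ih i h (by omega))
      · rw [h]; exact hk
  have hub : ∀ j, j ≤ n → v 0 ≤ v j + (j : F) / (n : F) := by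
    intro j
    induction j with
    | zero => simp
    | succ k ih =>
      intro hjn
      have h1 := ih (by omega)
      have h2 := hstep k (by omega)
      have h3 := hgap_le k (by omega)
      have : ((k : F) + 1) / (n : F) = (k : F) / n + 1 / n := by ring
      push_cast
      rw [this]
      linarith
  constructor
  · exact fun i j h hj => hlt j i h hj
  · intro j hj
    show v 0 ≤ v j + 1
    have h1 := hub j hj
    have h2 : (j : F) / (n : F) ≤ 1 := by
      rw [div_le_one hn0]
      exact_mod_cast hj
    linarith

end FieldFacts


lemma exists_chain (a b p n : ℕ) (hab : Nat.Coprime a b) (hb : 1 < b) (hba : b < a)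
    (hp : p.Prime) (hpb : p ∣ b) (hn : 1 ≤ n) :
    ∃ m : ℕ → ℕ,
      (∀ i, i < n → m i * b ^ (2 ^ ((n * a) * (i + 1)) - 2 ^ ((n * a) * i))
        = m (i + 1) * a ^ (2 ^ ((n * a) * (i + 1)) - 2 ^ ((n * a) * i)) + 1) ∧
      (∀ i, i ≤ n → 0 < m i ∧ Nat.Coprime (m i) p) := by
  set K := n * a with hK
  have ha1 : 1 ≤ a := by omega
  have hK1 : 1 ≤ K := Nat.mul_le_mul hn ha1
  set d : ℕ → ℕ := fun i => 2 ^ (K * (i + 1)) - 2 ^ (K * i) with hd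
  have hd1 : ∀ i, 1 ≤ d i := by
    intro i
    have : 2 ^ (K * i) < 2 ^ (K * (i + 1)) := by
      apply Nat.pow_lt_pow_right (by norm_num)
      have : K * (i + 1) = K * i + K := by ring
      omega
    simp only [hd]
    omega
  have hpa : Nat.Coprime p a := (Nat.Coprime.coprime_dvd_right hpb hab).symm
  obtain ⟨m, heq, h0⟩ := chain_aux a b (by omega) hab n d p hp.pos hpa 1
  have h1p : (1 : ℕ) % p = 1 := Nat.mod_eq_of_lt hp.one_lt
  have hm0p : m 0 % p = 1 := by rw [h0, h1p]
  have hpdvdb : ∀ i, p ∣ b ^ d i := fun i => hpb.trans (dvd_pow_self b (by have := hd1 i; omega))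
  refine ⟨m, heq, ?_⟩
  intro i hi
  constructor
  · -- positivity
    rcases Nat.lt_or_ge i n with h | h
    · have hq := heq i h
      by_contra h0'
      have hmi : m i = 0 := by omega
      rw [hmi, zero_mul] at hq
      omega
    · have hin : i = n := by omega
      have hlast := heq (n - 1) (by omega)
      have hnn : n - 1 + 1 = n := by omega
      rw [hnn] at hlast
      by_contra h0'
      have hmn : m n = 0 := by rw [← hin]; omega
      rw [hmn, zero_mul, zero_add] at hlast
      have hdv : b ^ d (n - 1) ∣ 1 := Dvd.intro_left (m (n - 1)) hlast
      have hle := Nat.le_of_dvd one_pos hdv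
      have h2b : 2 ≤ b ^ d (n - 1) := by
        calc 2 ≤ b := hb
          _ = b ^ 1 := (pow_one b).symm
          _ ≤ b ^ d (n - 1) := Nat.pow_le_pow_right (by omega) (hd1 _)
      omega
  · -- coprimality
    rcases Nat.eq_zero_or_pos i with h | h
    · subst h
      rw [Nat.coprime_comm, hp.coprime_iff_not_dvd]
      intro hdvd
      have : m 0 % p = 0 := Nat.mod_eq_zero_of_dvd hdvd
      omega
    · have hi1 : i - 1 < n := by omega
      have heq' := heq (i - 1) hi1
      have hii : i - 1 + 1 = i := by omega
      rw [hii] at heq'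
      rw [Nat.coprime_comm, hp.coprime_iff_not_dvd]
      intro hdvd
      have hd1' : p ∣ m (i - 1) * b ^ d (i - 1) := Dvd.dvd.mul_left (hpdvdb (i - 1)) _
      have hd2 : p ∣ m i * a ^ d (i - 1) := hdvd.mul_right _
      have : p ∣ 1 := by
        have := Nat.dvd_sub hd1' hd2
        rw [heq'] at this
        simpa using this
      exact Nat.Prime.one_lt hp |>.ne' (Nat.dvd_one.mp this) |>.elim


lemma key (a b p n : ℕ) (hab : Nat.Coprime a b) (hb : 1 < b) (hba : b < a)
    (hp : p.Prime) (hpb : p ∣ b) (hn : 1 ≤ n) :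
    ∃ (K : ℕ) (m : ℕ → ℕ), 1 ≤ K ∧
      (∀ i, i ≤ n → 0 < m i ∧ Nat.Coprime (m i) p) ∧
      (∀ i j, i < j → j ≤ n →
        (m j : ℚ) * ((a : ℚ) / (b : ℚ)) ^ (2 ^ (K * j)) <
          (m i : ℚ) * ((a : ℚ) / (b : ℚ)) ^ (2 ^ (K * i))) ∧
      (∀ i j, i < j → j ≤ n →
        (m j : ℝ) * ((a : ℝ) / (b : ℝ)) ^ (2 ^ (K * j)) <
          (m i : ℝ) * ((a : ℝ) / (b : ℝ)) ^ (2 ^ (K * i))) ∧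
      (∀ j, j ≤ n →
        (m 0 : ℝ) * ((a : ℝ) / (b : ℝ)) ^ (2 ^ (K * 0)) ≤
          (m j : ℝ) * ((a : ℝ) / (b : ℝ)) ^ (2 ^ (K * j)) + 1) := by
  obtain ⟨m, heq, hpos⟩ := exists_chain a b p n hab hb hba hp hpb hn
  have hbd : ∀ i, i < n → n * a ^ (2 ^ ((n * a) * i)) ≤ b ^ (2 ^ ((n * a) * (i + 1))) :=
    fun i _ => bound_lemma a b n hb hba hn i
  obtain ⟨hQ1, hQ2⟩ := field_facts (F := ℚ) a b n (n * a) m hb hba hn heq hbd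
  obtain ⟨hR1, hR2⟩ := field_facts (F := ℝ) a b n (n * a) m hb hba hn heq hbd
  have ha1 : 1 ≤ a := by omega
  exact ⟨n * a, m, Nat.mul_le_mul hn ha1, hpos, hQ1, hR1, hR2⟩

theorem stmt_17 (a b p : ℕ) (hab : Nat.Coprime a b) (hb : 1 < b) (hba : b < a)
    (hp : p.Prime) (hpb : p ∣ b) :
    (∀ n : ℕ, 1 ≤ n → ∃ f m : ℕ → ℕ,
      f 0 = 0 ∧ (∀ i, i < n → f i < f (i + 1)) ∧
      (∀ i, i ≤ n → 0 < m i ∧ Nat.Coprime (m i) p) ∧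
      (∀ i j, i ≤ n → j ≤ n → i ≠ j →
        (m i : ℚ) * ((a : ℚ) / (b : ℚ)) ^ (2 ^ f i) - 2 ≠
          (m j : ℚ) * ((a : ℚ) / (b : ℚ)) ^ (2 ^ f j) - 2) ∧
      (∃ L : ℝ, ∀ i, i ≤ n →
        L ≤ (m i : ℝ) * ((a : ℝ) / (b : ℝ)) ^ (2 ^ f i) - 2 ∧
        (m i : ℝ) * ((a : ℝ) / (b : ℝ)) ^ (2 ^ f i) - 2 ≤ L + 1)) ∧
    ¬ ∃ B : ℕ, ∀ t : ℤ,
        ({x : ℝ | ∃ m k : ℕ, 1 ≤ m ∧ x = (m : ℝ) * ((a : ℝ) / (b : ℝ)) ^ (2 ^ k) - 2} ∩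
          Set.Icc (t : ℝ) ((t : ℝ) + 1)).Finite ∧
        ({x : ℝ | ∃ m k : ℕ, 1 ≤ m ∧ x = (m : ℝ) * ((a : ℝ) / (b : ℝ)) ^ (2 ^ k) - 2} ∩
          Set.Icc (t : ℝ) ((t : ℝ) + 1)).ncard < B := by
  constructor
  · intro n hn
    obtain ⟨K, m, hK1, hpos, hQ, hR, hub⟩ := key a b p n hab hb hba hp hpb hn
    refine ⟨fun i => K * i, m, by simp, ?_, hpos, ?_, ?_⟩
    · intro i _
      show K * i < K * (i + 1)
      rw [Nat.mul_succ]
      omega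
    · intro i j hi hj hij
      show (m i : ℚ) * ((a : ℚ) / (b : ℚ)) ^ (2 ^ (K * i)) - 2 ≠
        (m j : ℚ) * ((a : ℚ) / (b : ℚ)) ^ (2 ^ (K * j)) - 2
      rcases lt_or_gt_of_ne hij with h | h
      · have := hQ i j h hj
        intro hc
        linarith
      · have := hQ j i h hi
        intro hc
        linarith
    · refine ⟨(m 0 : ℝ) * ((a : ℝ) / (b : ℝ)) ^ (2 ^ (K * 0)) - 3, ?_⟩
      intro i hi
      have h1 := hub i hi
      have h2 : (m i : ℝ) * ((a : ℝ) / (b : ℝ)) ^ (2 ^ (K * i)) ≤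
          (m 0 : ℝ) * ((a : ℝ) / (b : ℝ)) ^ (2 ^ (K * 0)) := by
        rcases Nat.eq_zero_or_pos i with h | h
        · rw [h]
        · exact (hR 0 i h hi).le
      constructor
      · show (m 0 : ℝ) * ((a : ℝ) / (b : ℝ)) ^ (2 ^ (K * 0)) - 3 ≤
          (m i : ℝ) * ((a : ℝ) / (b : ℝ)) ^ (2 ^ (K * i)) - 2
        linarith
      · show (m i : ℝ) * ((a : ℝ) / (b : ℝ)) ^ (2 ^ (K * i)) - 2 ≤
          (m 0 : ℝ) * ((a : ℝ) / (b : ℝ)) ^ (2 ^ (K * 0)) - 3 + 1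
        linarith
  · rintro ⟨B, hB⟩
    set S : Set ℝ :=
      {x : ℝ | ∃ m k : ℕ, 1 ≤ m ∧ x = (m : ℝ) * ((a : ℝ) / (b : ℝ)) ^ (2 ^ k) - 2} with hS
    set n : ℕ := 2 * B + 2 with hn
    obtain ⟨K, m, hK1, hpos, hQ, hR, hub⟩ := key a b p n hab hb hba hp hpb (by omega)
    set t : ℤ := ⌊(m 0 : ℝ) * ((a : ℝ) / (b : ℝ)) ^ (2 ^ (K * 0)) - 2⌋ with ht
    have hfl : (t : ℝ) ≤ (m 0 : ℝ) * ((a : ℝ) / (b : ℝ)) ^ (2 ^ (K * 0)) - 2 :=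
      Int.floor_le _
    have hfu : (m 0 : ℝ) * ((a : ℝ) / (b : ℝ)) ^ (2 ^ (K * 0)) - 2 < (t : ℝ) + 1 :=
      Int.lt_floor_add_one _
    set w : ℕ → ℝ := fun i => (m i : ℝ) * ((a : ℝ) / (b : ℝ)) ^ (2 ^ (K * i)) - 2 with hw
    have hwS : ∀ i, i ≤ n → w i ∈ S := by
      intro i hi
      exact ⟨m i, K * i, (hpos i hi).1, rfl⟩
    have hwlow : ∀ i, i ≤ n → (t : ℝ) - 1 ≤ w i := by
      intro i hi
      have := hub i hi
      simp only [hw]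
      linarith
    have hwhigh : ∀ i, i ≤ n → w i < (t : ℝ) + 1 := by
      intro i hi
      have h2 : (m i : ℝ) * ((a : ℝ) / (b : ℝ)) ^ (2 ^ (K * i)) ≤
          (m 0 : ℝ) * ((a : ℝ) / (b : ℝ)) ^ (2 ^ (K * 0)) := by
        rcases Nat.eq_zero_or_pos i with h | h
        · rw [h]
        · exact (hR 0 i h hi).le
      simp only [hw]
      linarith
    set F : Finset ℝ := (Finset.range (n + 1)).image w with hF
    have hinj : Set.InjOn w ↑(Finset.range (n + 1)) := by
      intro i hi j hj hij
      simp only [Finset.coe_range, Set.mem_Iio] at hi hj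
      by_contra hne
      have hvij : ∀ i' j', i' < j' → j' ≤ n → w j' < w i' := by
        intro i' j' h1 h2
        have := hR i' j' h1 h2
        simp only [hw]
        linarith
      rcases lt_or_gt_of_ne hne with h | h
      · have := hvij i j h (by omega)
        linarith [hij.le, hij.ge]
      · have := hvij j i h (by omega)
        linarith [hij.le, hij.ge]
    have hcard : F.card = n + 1 := by
      rw [hF, Finset.card_image_of_injOn hinj, Finset.card_range]
    have h1 := hB (t - 1)
    have h2 := hB t
    have hsub : (↑F : Set ℝ) ⊆
        (S ∩ Set.Icc ((t - 1 : ℤ) : ℝ) (((t - 1 : ℤ) : ℝ) + 1)) ∪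
        (S ∩ Set.Icc ((t : ℤ) : ℝ) (((t : ℤ) : ℝ) + 1)) := by
      intro x hx
      simp only [hF, Finset.coe_image, Finset.coe_range, Set.mem_image, Set.mem_Iio] at hx
      obtain ⟨i, hi, rfl⟩ := hx
      have hin : i ≤ n := by omega
      have hlow := hwlow i hin
      have hhigh := hwhigh i hin
      have hcast : ((t - 1 : ℤ) : ℝ) = (t : ℝ) - 1 := by push_cast; ring
      rcases le_or_gt (w i) (t : ℝ) with h | h
      · left
        refine ⟨hwS i hin, ?_, ?_⟩
        · rw [hcast]; linarith
        · rw [hcast]; linarith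
      · right
        exact ⟨hwS i hin, h.le, (hwhigh i hin).le⟩
    have hle : (↑F : Set ℝ).ncard ≤
        (S ∩ Set.Icc ((t - 1 : ℤ) : ℝ) (((t - 1 : ℤ) : ℝ) + 1)).ncard +
        (S ∩ Set.Icc ((t : ℤ) : ℝ) (((t : ℤ) : ℝ) + 1)).ncard :=
      le_trans (Set.ncard_le_ncard hsub (h1.1.union h2.1)) (Set.ncard_union_le _ _)
    rw [Set.ncard_coe_finset, hcard] at hle
    have hc1 := h1.2
    have hc2 := h2.2
    omega
end
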